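/- arXiv:1609.09507 — 5 statements merged into one kernel-verified Lean document; each statement's English description precedes it below -/
import Mathlib

section
/- When n is odd, the vector v ∈ ℝ^n given by v = (1,...,1, 1,-1,1,-1,...,1,-1, 1, 1,...,1) — consisting of k ones, followed by the alternating string 1,-1 of length n-2k-1, then a 1, then k ones — is a null vector of A_k, i.e., A_k v = 0. -/
/-- `ε_{m,ℓ} = 1` if `m > ℓ`, `-1` otherwise. -/
noncomputable def eps (m l : ℕ) : ℝ := if l < m then 1 else -1

/-- The skew-symmetric Toeplitz matrix `A_k` of size `n`, with
`(A_k)_{i,j} = ε_{n+i,k+j}` for `i < j` (indices 1-based). -/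
noncomputable def Amat (n k : ℕ) : Matrix (Fin n) (Fin n) ℝ :=
  fun i j =>
    if i < j then eps (n + i.1 + 1) (k + j.1 + 1)
    else if j < i then -(eps (n + j.1 + 1) (k + i.1 + 1))
    else 0

/-- The vector `v` (1-based position `pos = i+1`): `v_pos = 1` for `pos ≤ k` or `pos ≥ n-k`,
and `v_pos = (-1)^(pos-k-1)` (alternating `1,-1` starting at `pos = k+1`) in between. -/
noncomputable def nullv (n k : ℕ) : Fin n → ℝ := fun i =>
  if i.1 + 1 ≤ k ∨ n - k ≤ i.1 + 1 then 1 else (-1 : ℝ) ^ (i.1 + 1 - k - 1)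

/-- ℕ-indexed version of `nullv`. -/
noncomputable def Vf (n k : ℕ) : ℕ → ℝ := fun j =>
  if j + 1 ≤ k ∨ n - k ≤ j + 1 then 1 else (-1 : ℝ) ^ (j - k)

/-- ℕ-indexed version of the rows of `Amat`. -/
noncomputable def coeffA (n k i : ℕ) : ℕ → ℝ := fun j =>
  if i < j then eps (n + i + 1) (k + j + 1)
  else if j < i then -(eps (n + j + 1) (k + i + 1))
  else 0

/-- Partial sums of `Vf`. -/
noncomputable def Sf (n k t : ℕ) : ℝ := ∑ j ∈ Finset.range t, Vf n k j

lemma coeffA_self (n k i : ℕ) : coeffA n k i i = 0 := by simp [coeffA]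

lemma coeffA_pos_hi (n k i j : ℕ) (hk : k ≤ n) (h1 : i < j) (h2 : j < i + (n - k)) :
    coeffA n k i j = 1 := by
  unfold coeffA eps
  rw [if_pos h1, if_pos (by omega)]

lemma coeffA_neg_hi (n k i j : ℕ) (hk : k ≤ n) (h1 : i < j) (h2 : i + (n - k) ≤ j) :
    coeffA n k i j = -1 := by
  unfold coeffA eps
  rw [if_pos h1, if_neg (by omega)]

lemma coeffA_neg_lo (n k i j : ℕ) (hk : k ≤ n) (h1 : j < i) (h2 : i < j + (n - k)) :
    coeffA n k i j = -1 := by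
  unfold coeffA eps
  rw [if_neg (by omega), if_pos h1, if_pos (by omega)]

lemma coeffA_pos_lo (n k i j : ℕ) (hk : k < n) (h2 : j + (n - k) ≤ i) :
    coeffA n k i j = 1 := by
  unfold coeffA eps
  rw [if_neg (by omega), if_pos (by omega), if_neg (by omega)]
  norm_num

lemma Sf_zero (n k : ℕ) : Sf n k 0 = 0 := by simp [Sf]

lemma Sf_succ (n k t : ℕ) : Sf n k (t + 1) = Sf n k t + Vf n k t := by
  simp [Sf, Finset.sum_range_succ]

lemma Sf_low (n k t : ℕ) (ht : t ≤ k) : Sf n k t = t := by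
  induction t with
  | zero => simp [Sf]
  | succ t ih =>
    rw [Sf_succ, ih (by omega)]
    have hv : Vf n k t = 1 := by unfold Vf; rw [if_pos (Or.inl (by omega))]
    rw [hv]; push_cast; ring

lemma Sf_mid (n k d : ℕ) (h : 2 * k + d + 1 ≤ n) :
    Sf n k (k + d) = k + (if Even d then (0 : ℝ) else 1) := by
  induction d with
  | zero => simp [Sf_low n k k le_rfl]
  | succ d ih =>
    have hv : Vf n k (k + d) = (-1 : ℝ) ^ d := by
      unfold Vf
      rw [if_neg (by omega)]
      congr 1
      omega
    rw [show k + (d + 1) = (k + d) + 1 by ring, Sf_succ, ih (by omega), hv]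
    rcases Nat.even_or_odd d with he | ho
    · rw [he.neg_one_pow, if_pos he, if_neg (by simp [Nat.even_add_one, he])]
      ring
    · rw [ho.neg_one_pow, if_neg (Nat.not_even_iff_odd.2 ho),
        if_pos (Nat.even_add_one.2 (Nat.not_even_iff_odd.2 ho))]
      ring

lemma Sf_high (n k d : ℕ) (hn : Odd n) (hk : 2 * k + 1 ≤ n) (hd : d ≤ k + 1) :
    Sf n k (n - k - 1 + d) = k + d := by
  induction d with
  | zero =>
    obtain ⟨t, ht⟩ := hn
    have h1 := Sf_mid n k (n - 2 * k - 1) (by omega)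
    have h3 : Even (n - 2 * k - 1) := ⟨t - k, by omega⟩
    rw [show k + (n - 2 * k - 1) = n - k - 1 by omega] at h1
    simpa [h3] using h1
  | succ d ih =>
    have hv : Vf n k (n - k - 1 + d) = 1 := by
      unfold Vf; rw [if_pos (Or.inr (by omega))]
    rw [show n - k - 1 + (d + 1) = (n - k - 1 + d) + 1 by ring, Sf_succ,
      ih (by omega), hv]
    push_cast; ring

lemma sum_Ico_Vf (n k a b : ℕ) (h : a ≤ b) :
    ∑ j ∈ Finset.Ico a b, Vf n k j = Sf n k b - Sf n k a := by
  rw [Sf, Sf, Finset.sum_Ico_eq_sub _ h]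

lemma piece (n k I a b : ℕ) (c : ℝ) (hab : a ≤ b)
    (hc : ∀ j, a ≤ j → j < b → coeffA n k I j = c) :
    ∑ j ∈ Finset.Ico a b, coeffA n k I j * Vf n k j
      = c * (Sf n k b - Sf n k a) := by
  rw [← sum_Ico_Vf n k a b hab, Finset.mul_sum]
  exact Finset.sum_congr rfl fun j hj => by
    rw [hc j (Finset.mem_Ico.1 hj).1 (Finset.mem_Ico.1 hj).2]

lemma key (n k I : ℕ) (hn : Odd n) (hk : 2 * k + 1 ≤ n) (hI : I < n) :
    ∑ j ∈ Finset.range n, coeffA n k I j * Vf n k j = 0 := by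
  have hkn : k < n := by omega
  have hSn : Sf n k n = 2 * (k : ℝ) + 1 := by
    have := Sf_high n k (k + 1) hn hk le_rfl
    rw [show n - k - 1 + (k + 1) = n by omega] at this
    rw [this]; push_cast; ring
  rcases lt_or_ge I k with hA | hA'
  · -- Case A : I < k
    have hSm : Sf n k (I + (n - k)) = (k : ℝ) + (I + 1) := by
      have := Sf_high n k (I + 1) hn hk (by omega)
      rw [show n - k - 1 + (I + 1) = I + (n - k) by omega] at this
      rw [this]; push_cast; ring
    rw [Finset.range_eq_Ico,
      ← Finset.sum_Ico_consecutive _ (Nat.zero_le I) (show I ≤ n by omega),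
      ← Finset.sum_Ico_consecutive _ (show I ≤ I + 1 by omega) (show I + 1 ≤ n by omega),
      ← Finset.sum_Ico_consecutive _ (show I + 1 ≤ I + (n - k) by omega)
        (show I + (n - k) ≤ n by omega),
      piece n k I 0 I (-1) (by omega)
        (fun j h1 h2 => coeffA_neg_lo n k I j (by omega) h2 (by omega)),
      piece n k I I (I + 1) 0 (by omega)
        (fun j h1 h2 => by rw [show j = I by omega, coeffA_self]),
      piece n k I (I + 1) (I + (n - k)) 1 (by omega)
        (fun j h1 h2 => coeffA_pos_hi n k I j (by omega) (by omega) h2),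
      piece n k I (I + (n - k)) n (-1) (by omega)
        (fun j h1 h2 => coeffA_neg_hi n k I j (by omega) (by omega) h1),
      Sf_zero, Sf_low n k I (by omega), Sf_low n k (I + 1) (by omega), hSn, hSm]
    push_cast; ring
  · rcases le_or_gt (I + k + 2) n with hB | hC
    · -- Case B : k ≤ I ≤ n - k - 2
      obtain ⟨d, rfl⟩ : ∃ d, I = k + d := ⟨I - k, by omega⟩
      have h2 : Sf n k (k + d + 1) = k + (if Even (d + 1) then (0 : ℝ) else 1) := by
        have := Sf_mid n k (d + 1) (by omega)
        rw [show k + (d + 1) = k + d + 1 by ring] at this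
        exact this
      rw [Finset.range_eq_Ico,
        ← Finset.sum_Ico_consecutive _ (Nat.zero_le (k + d)) (show k + d ≤ n by omega),
        ← Finset.sum_Ico_consecutive _ (show k + d ≤ k + d + 1 by omega)
          (show k + d + 1 ≤ n by omega),
        piece n k (k + d) 0 (k + d) (-1) (by omega)
          (fun j h1 hlt => coeffA_neg_lo n k (k + d) j (by omega) hlt (by omega)),
        piece n k (k + d) (k + d) (k + d + 1) 0 (by omega)
          (fun j h1 hlt => by rw [show j = k + d by omega, coeffA_self]),
        piece n k (k + d) (k + d + 1) n 1 (by omega)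
          (fun j h1 hlt => coeffA_pos_hi n k (k + d) j (by omega) (by omega) (by omega)),
        Sf_zero, hSn, Sf_mid n k d (by omega), h2]
      rcases Nat.even_or_odd d with he | ho
      · rw [if_pos he, if_neg (by simp [Nat.even_add_one, he])]
        ring
      · rw [if_neg (Nat.not_even_iff_odd.2 ho),
          if_pos (Nat.even_add_one.2 (Nat.not_even_iff_odd.2 ho))]
        ring
    · -- Case C : I ≥ n - k - 1
      obtain ⟨d, hd, rfl⟩ : ∃ d, d ≤ k ∧ I = n - k - 1 + d :=
        ⟨I - (n - k - 1), by omega, by omega⟩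
      have hSI : Sf n k (n - k - 1 + d) = (k : ℝ) + d := by
        have := Sf_high n k d hn hk (by omega)
        rw [this]
      have hSI1 : Sf n k (n - k - 1 + d + 1) = (k : ℝ) + (d + 1) := by
        have := Sf_high n k (d + 1) hn hk (by omega)
        rw [show n - k - 1 + (d + 1) = n - k - 1 + d + 1 by ring] at this
        rw [this]; push_cast; ring
      rw [Finset.range_eq_Ico,
        ← Finset.sum_Ico_consecutive _ (Nat.zero_le d) (show d ≤ n by omega),
        ← Finset.sum_Ico_consecutive _ (show d ≤ n - k - 1 + d by omega)
          (show n - k - 1 + d ≤ n by omega),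
        ← Finset.sum_Ico_consecutive _ (show n - k - 1 + d ≤ n - k - 1 + d + 1 by omega)
          (show n - k - 1 + d + 1 ≤ n by omega),
        piece n k (n - k - 1 + d) 0 d 1 (by omega)
          (fun j h1 hlt => coeffA_pos_lo n k (n - k - 1 + d) j (by omega) (by omega)),
        piece n k (n - k - 1 + d) d (n - k - 1 + d) (-1) (by omega)
          (fun j h1 hlt => coeffA_neg_lo n k (n - k - 1 + d) j (by omega) hlt (by omega)),
        piece n k (n - k - 1 + d) (n - k - 1 + d) (n - k - 1 + d + 1) 0 (by omega)
          (fun j h1 hlt => by rw [show j = n - k - 1 + d by omega, coeffA_self]),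
        piece n k (n - k - 1 + d) (n - k - 1 + d + 1) n 1 (by omega)
          (fun j h1 hlt => coeffA_pos_hi n k (n - k - 1 + d) j (by omega) (by omega) (by omega)),
        Sf_zero, Sf_low n k d (by omega), hSn, hSI, hSI1]
      ring

/-- for `n` odd, the vector `v = (1,…,1,1,-1,…,1,-1,1,1,…,1)` is a null
vector of `A_k`. -/
theorem Amat_mulVec_nullv (n k : ℕ) (hn : Odd n) (hk : 2 * k < n) :
    (Amat n k).mulVec (nullv n k) = 0 := by
  funext i
  have hterm : ∀ j : Fin n, Amat n k i j * nullv n k j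
      = (fun m : ℕ => coeffA n k i.1 m * Vf n k m) j.1 := by
    intro j
    have h1 : Amat n k i j = coeffA n k i.1 j.1 := by
      simp only [Amat, coeffA, Fin.lt_def]
    have hexp : j.1 + 1 - k - 1 = j.1 - k := by omega
    have h2 : nullv n k j = Vf n k j.1 := by
      unfold nullv Vf
      rw [hexp]
    rw [h1, h2]
  show ∑ j, Amat n k i j * nullv n k j = 0
  rw [Finset.sum_congr rfl fun j _ => hterm j]
  exact (Fin.sum_univ_eq_sum_range (fun m => coeffA n k i.1 m * Vf n k m) n).trans
    (key n k i.1 hn (by omega) i.isLt)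
end

section
/- When n is odd, the rational function C = x_1⋯x_k · (x_{k+1}x_{k+3}⋯x_{n-k})/(x_{k+2}x_{k+4}⋯x_{n-k-1}) · x_{n-k+1}⋯x_n is a Casimir function of the diagonal Poisson bracket π_k: that is, {x_i, C}_k = 0 for all i = 1,...,n. -/
open Finset

/-- The rational function
`C = x_1⋯x_k · (x_{k+1}x_{k+3}⋯x_{n-k})/(x_{k+2}x_{k+4}⋯x_{n-k-1}) · x_{n-k+1}⋯x_n`
(positions are 1-based: position of index `j : Fin n` is `j+1`). -/
noncomputable def Cas (n k : ℕ) : (Fin n → ℝ) → ℝ := fun x =>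
  (∏ j ∈ univ.filter (fun j : Fin n =>
      j.1 + 1 ≤ k ∨ n - k + 1 ≤ j.1 + 1 ∨ Odd (j.1 + 1 - k)), x j) /
  (∏ j ∈ univ.filter (fun j : Fin n =>
      k < j.1 + 1 ∧ j.1 + 1 < n - k ∧ Even (j.1 + 1 - k)), x j)

def e0 (n k p : ℕ) : ℤ := if p < k ∨ n - k ≤ p ∨ (p - k) % 2 = 0 then 1 else -1

def aZ (n k q p : ℕ) : ℤ :=
  if q < p then (if k + p < n + q then 1 else -1)
  else if p < q then -(if k + q < n + p then 1 else -1) else 0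

def F0 (n k m : ℕ) : ℤ := ∑ p ∈ range m, e0 n k p

lemma F0_closed (n k : ℕ) (hn : n % 2 = 1) (hk : 2*k+1 ≤ n) (m : ℕ) :
    F0 n k m = if m ≤ k then (m : ℤ)
      else if m ≤ n - k then (k : ℤ) + ((m - k) % 2 : ℕ)
      else (m : ℤ) - n + 2*k + 1 := by
  induction m with
  | zero => simp [F0]
  | succ m ih =>
    have h : F0 n k (m+1) = F0 n k m + e0 n k m := by
      rw [F0, Finset.sum_range_succ]; rfl
    rw [h, ih]
    unfold e0
    split_ifs <;> omega

set_option maxHeartbeats 2000000 in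
lemma key_s3 (n k q : ℕ) (hn : n % 2 = 1) (hk : 2*k+1 ≤ n) (hq : q < n) :
    ∑ p ∈ range n, aZ n k q p * e0 n k p = 0 := by
  set t1 := q + 1 - (n - k) with ht1
  set t2 := min n (q + (n - k)) with ht2
  have h1 : t1 ≤ q := by omega
  have h2 : q + 1 ≤ t2 := by omega
  have h3 : t2 ≤ n := by omega
  set f : ℕ → ℤ := fun p => aZ n k q p * e0 n k p with hf
  have A1 := Finset.sum_Ico_consecutive f (Nat.zero_le t1) h1
  have A2 := Finset.sum_Ico_consecutive f (Nat.zero_le q) (Nat.le_succ q)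
  have A3 := Finset.sum_Ico_consecutive f (Nat.zero_le (q+1)) h2
  have A4 := Finset.sum_Ico_consecutive f (Nat.zero_le t2) h3
  have B1 : ∑ p ∈ Ico 0 t1, f p = F0 n k t1 := by
    rw [show (Ico 0 t1) = range t1 by rw [Finset.range_eq_Ico], F0]
    refine Finset.sum_congr rfl (fun p hp => ?_)
    rw [Finset.mem_range] at hp
    rw [hf]; simp only
    unfold aZ
    rw [if_neg (by omega), if_pos (by omega), if_neg (by omega)]
    ring
  have B2 : ∑ p ∈ Ico t1 q, f p = -(F0 n k q - F0 n k t1) := by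
    have e : ∑ p ∈ Ico t1 q, f p = ∑ p ∈ Ico t1 q, -(e0 n k p) := by
      refine Finset.sum_congr rfl (fun p hp => ?_)
      rw [Finset.mem_Ico] at hp
      rw [hf]; simp only
      unfold aZ
      rw [if_neg (by omega), if_pos (by omega), if_pos (by omega)]
      ring
    rw [e, Finset.sum_neg_distrib, Finset.sum_Ico_eq_sub _ h1]
    rfl
  have B3 : ∑ p ∈ Ico q (q+1), f p = 0 := by
    rw [Nat.Ico_succ_singleton, Finset.sum_singleton, hf]
    simp [aZ]
  have B4 : ∑ p ∈ Ico (q+1) t2, f p = F0 n k t2 - F0 n k (q+1) := by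
    have e : ∑ p ∈ Ico (q+1) t2, f p = ∑ p ∈ Ico (q+1) t2, e0 n k p := by
      refine Finset.sum_congr rfl (fun p hp => ?_)
      rw [Finset.mem_Ico] at hp
      rw [hf]; simp only
      unfold aZ
      rw [if_pos (by omega), if_pos (by omega)]
      ring
    rw [e, Finset.sum_Ico_eq_sub _ h2]
    rfl
  have B5 : ∑ p ∈ Ico t2 n, f p = -(F0 n k n - F0 n k t2) := by
    have e : ∑ p ∈ Ico t2 n, f p = ∑ p ∈ Ico t2 n, -(e0 n k p) := by
      refine Finset.sum_congr rfl (fun p hp => ?_)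
      rw [Finset.mem_Ico] at hp
      rw [hf]; simp only
      unfold aZ
      rw [if_pos (by omega), if_neg (by omega)]
      ring
    rw [e, Finset.sum_neg_distrib, Finset.sum_Ico_eq_sub _ h3]
    rfl
  have : ∑ p ∈ range n, f p = F0 n k t1 + (-(F0 n k q - F0 n k t1)) + 0
      + (F0 n k t2 - F0 n k (q+1)) + (-(F0 n k n - F0 n k t2)) := by
    rw [Finset.range_eq_Ico, ← A4, ← A3, ← A2, ← A1, B1, B2, B3, B4, B5]
  rw [this]
  simp only [F0_closed n k hn hk]
  split_ifs <;> omega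

lemma Amat_eq (n k : ℕ) (i j : Fin n) : Amat n k i j = ((aZ n k i.1 j.1 : ℤ) : ℝ) := by
  simp only [Amat, eps, aZ, Fin.lt_def]
  split_ifs <;> (try norm_num) <;> omega

-- derivative of the numerator/denominator products
lemma hasFDeriv_prod (n : ℕ) (s : Finset (Fin n)) (x : Fin n → ℝ) :
    HasFDerivAt (fun y : Fin n → ℝ => ∏ m ∈ s, y m)
      (∑ m ∈ s, (∏ l ∈ s.erase m, x l) • ContinuousLinearMap.proj (R := ℝ) (φ := fun _ : Fin n => ℝ) m) x :=
  HasFDerivAt.finset_prod (fun m _ => hasFDerivAt_apply m x)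

lemma prod_deriv_apply (n : ℕ) (s : Finset (Fin n)) (x : Fin n → ℝ) (j : Fin n) :
    (∑ m ∈ s, (∏ l ∈ s.erase m, x l) • ContinuousLinearMap.proj (R := ℝ) (φ := fun _ : Fin n => ℝ) m) (Pi.single j 1)
      = if j ∈ s then ∏ l ∈ s.erase j, x l else 0 := by
  classical
  rw [ContinuousLinearMap.sum_apply]
  simp only [ContinuousLinearMap.smul_apply, ContinuousLinearMap.proj_apply,
    Pi.single_apply, smul_eq_mul, mul_ite, mul_one, mul_zero]
  exact Finset.sum_ite_eq' s j _

lemma fderiv_Cas (n k : ℕ) (hn : n % 2 = 1) (hk : 2*k+1 ≤ n) (x : Fin n → ℝ)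
    (hx : ∀ j, x j ≠ 0) (j : Fin n) :
    fderiv ℝ (Cas n k) x (Pi.single j 1) = (e0 n k j.1 : ℝ) * Cas n k x / x j := by
  classical
  set Sp := univ.filter (fun j : Fin n =>
      j.1 + 1 ≤ k ∨ n - k + 1 ≤ j.1 + 1 ∨ Odd (j.1 + 1 - k)) with hSp
  set Sm := univ.filter (fun j : Fin n =>
      k < j.1 + 1 ∧ j.1 + 1 < n - k ∧ Even (j.1 + 1 - k)) with hSm
  have hP0 : (∏ m ∈ Sp, x m) ≠ 0 := Finset.prod_ne_zero_iff.2 (fun m _ => hx m)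
  have hQ0 : (∏ m ∈ Sm, x m) ≠ 0 := Finset.prod_ne_zero_iff.2 (fun m _ => hx m)
  have hP := hasFDeriv_prod n Sp x
  have hQ := hasFDeriv_prod n Sm x
  have hinv : HasFDerivAt (fun y : Fin n → ℝ => (∏ m ∈ Sm, y m)⁻¹)
      ((ContinuousLinearMap.smulRight (1 : ℝ →L[ℝ] ℝ) (-((∏ m ∈ Sm, x m) ^ 2)⁻¹)).comp
        (∑ m ∈ Sm, (∏ l ∈ Sm.erase m, x l) • ContinuousLinearMap.proj m)) x := by
    exact (hasFDerivAt_inv hQ0).comp x hQ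
  have hC : HasFDerivAt (fun y : Fin n → ℝ => (∏ m ∈ Sp, y m) * (∏ m ∈ Sm, y m)⁻¹)
      ((∏ m ∈ Sp, x m) • ((ContinuousLinearMap.smulRight (1 : ℝ →L[ℝ] ℝ) (-((∏ m ∈ Sm, x m) ^ 2)⁻¹)).comp
          (∑ m ∈ Sm, (∏ l ∈ Sm.erase m, x l) • ContinuousLinearMap.proj m)) +
        (∏ m ∈ Sm, x m)⁻¹ • ∑ m ∈ Sp, (∏ l ∈ Sp.erase m, x l) • ContinuousLinearMap.proj m) x := by
    exact hP.mul hinv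
  have hCas : Cas n k = fun y : Fin n → ℝ => (∏ m ∈ Sp, y m) * (∏ m ∈ Sm, y m)⁻¹ := by
    funext y
    rw [Cas, div_eq_mul_inv]
  simp only [hCas]
  rw [hC.fderiv]
  have hjlt := j.2
  have hSpIff : j ∈ Sp ↔ (j.1+1 ≤ k ∨ n-k+1 ≤ j.1+1 ∨ (j.1+1-k)%2 = 1) := by
    rw [hSp, Finset.mem_filter, Nat.odd_iff]
    simp only [Finset.mem_univ, true_and]
  have hSmIff : j ∈ Sm ↔ (k < j.1+1 ∧ j.1+1 < n-k ∧ (j.1+1-k)%2 = 0) := by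
    rw [hSm, Finset.mem_filter, Nat.even_iff]
    simp only [Finset.mem_univ, true_and]
  have hplus : j ∈ Sp → e0 n k j.1 = 1 := by
    rw [hSpIff]; intro h2; unfold e0; rw [if_pos (by omega)]
  have hneg : j ∉ Sp → e0 n k j.1 = -1 := by
    rw [hSpIff]; intro h2; unfold e0; rw [if_neg (by omega)]
  have hminus : j ∉ Sp → j ∈ Sm := by
    rw [hSpIff, hSmIff]; omega
  have hdisj : j ∈ Sp → j ∉ Sm := by
    rw [hSpIff, hSmIff]; omega
  simp only [ContinuousLinearMap.add_apply, ContinuousLinearMap.smul_apply,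
    ContinuousLinearMap.comp_apply, ContinuousLinearMap.smulRight_apply,
    ContinuousLinearMap.one_apply, prod_deriv_apply, smul_eq_mul]
  by_cases hj : j ∈ Sp
  · have he : e0 n k j.1 = 1 := hplus hj
    have hjm : j ∉ Sm := hdisj hj
    rw [if_pos hj, if_neg hjm, he]
    have hPe : x j * ∏ l ∈ Sp.erase j, x l = ∏ m ∈ Sp, x m := Finset.mul_prod_erase Sp x hj
    have hne : (∏ l ∈ Sp.erase j, x l) ≠ 0 := Finset.prod_ne_zero_iff.2 (fun m _ => hx m)
    rw [← hPe]
    push_cast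
    rw [eq_div_iff (hx j)]
    ring
  · have hjm : j ∈ Sm := hminus hj
    have he : e0 n k j.1 = -1 := hneg hj
    rw [if_neg hj, if_pos hjm, he]
    have hQe : x j * ∏ l ∈ Sm.erase j, x l = ∏ m ∈ Sm, x m := Finset.mul_prod_erase Sm x hjm
    have hne : (∏ l ∈ Sm.erase j, x l) ≠ 0 := Finset.prod_ne_zero_iff.2 (fun m _ => hx m)
    push_cast
    rw [eq_div_iff (hx j)]
    field_simp
    rw [← hQe]
    ring

/-- for `n` odd, `C` is a Casimir of the diagonal Poisson bracket `π_k`: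
`{x_i, C}_k = ∑_j (A_k)_{i,j} x_i x_j ∂C/∂x_j = 0` on the open set where all
coordinates are nonzero. -/
theorem Casimir_of_pik (n k : ℕ) (hn : Odd n) (hk : 2 * k + 1 ≤ n)
    (x : Fin n → ℝ) (hx : ∀ j, x j ≠ 0) (i : Fin n) :
    ∑ j, Amat n k i j * x i * x j * fderiv ℝ (Cas n k) x (Pi.single j 1) = 0 := by
  have hn2 : n % 2 = 1 := Nat.odd_iff.mp hn
  have hstep : ∀ j : Fin n, Amat n k i j * x i * x j * fderiv ℝ (Cas n k) x (Pi.single j 1)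
      = (x i * Cas n k x) * ((aZ n k i.1 j.1 * e0 n k j.1 : ℤ) : ℝ) := by
    intro j
    rw [fderiv_Cas n k hn2 hk x hx j, Amat_eq]
    push_cast
    rw [mul_assoc, mul_comm (x j), div_mul_cancel₀ _ (hx j)]
    ring
  rw [Finset.sum_congr rfl (fun j _ => hstep j), ← Finset.mul_sum]
  have hsum : ∑ j : Fin n, ((aZ n k i.1 j.1 * e0 n k j.1 : ℤ) : ℝ) = 0 := by
    have hkey := key_s3 n k i.1 hn2 hk i.2
    calc ∑ j : Fin n, ((aZ n k i.1 j.1 * e0 n k j.1 : ℤ) : ℝ)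
        = ∑ p ∈ range n, ((aZ n k i.1 p * e0 n k p : ℤ) : ℝ) :=
          Fin.sum_univ_eq_sum_range (fun p => ((aZ n k i.1 p * e0 n k p : ℤ) : ℝ)) n
      _ = ((∑ p ∈ range n, aZ n k i.1 p * e0 n k p : ℤ) : ℝ) := by push_cast; rfl
      _ = 0 := by rw [hkey]; exact Int.cast_zero
  rw [hsum, mul_zero]
end

section
/- For ℓ with k < ℓ ≤ n-k, the inclusion ι_ℓ : ℝ^n → ℝ^{n+1} inserting a zero in position ℓ+1 is a Poisson map from (ℝ^n, π_k^{(n)}) to (ℝ^{n+1}, π_k^{(n+1)}) onto a Poisson submanifold: for 1 ≤ i < j ≤ n, the reduced bracket {x_i, x_j}_N := {x_i∘p_ℓ, x_j∘p_ℓ}_k^{(n+1)} ∘ ι_ℓ equals ε_{n+i,j+k} x_i x_j = {x_i, x_j}_k^{(n)}. -/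
theorem eps_congr {m l m' l' : ℕ} (h : l < m ↔ l' < m') : eps m l = eps m' l' := by
  simp only [eps, h]

theorem Fin.val_succAbove {n : ℕ} (p : Fin (n + 1)) (i : Fin n) :
    (p.succAbove i : ℕ) = if (i : ℕ) < p then (i : ℕ) else (i : ℕ) + 1 := by
  unfold Fin.succAbove
  split_ifs <;> simp_all [Fin.lt_def]

section

variable {n k : ℕ}

theorem Amat_of_lt {i j : Fin n} (h : i < j) :
    Amat n k i j = eps (n + i + 1) (k + j + 1) :=
  if_pos h

theorem Amat_of_gt {i j : Fin n} (h : j < i) :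
    Amat n k i j = -eps (n + j + 1) (k + i + 1) := by
  simp only [Amat, if_neg h.not_gt, if_pos h]

theorem Amat_self (i : Fin n) : Amat n k i i = 0 := by
  simp only [Amat, lt_irrefl, if_false]

/-- The shift by `succAbove` could only flip the comparison when `k + j = n + i`, which
`k < ℓ ≤ n - k` rules out on either side of `ℓ`. -/
theorem eps_succAbove {ℓ : Fin (n + 1)} (hl1 : k < ℓ.1) (hl2 : ℓ.1 ≤ n - k)
    {i j : Fin n} (hij : i < j) :
    eps (n + 1 + ℓ.succAbove i + 1) (k + ℓ.succAbove j + 1) = eps (n + i + 1) (k + j + 1) := by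
  apply eps_congr
  rw [Fin.val_succAbove, Fin.val_succAbove]
  split_ifs <;> omega

theorem Amat_submatrix_succAbove {ℓ : Fin (n + 1)} (hl1 : k < ℓ.1)
    (hl2 : ℓ.1 ≤ n - k) :
    (Amat (n + 1) k).submatrix ℓ.succAbove ℓ.succAbove = Amat n k := by
  ext i j
  rw [Matrix.submatrix_apply]
  rcases lt_trichotomy i j with h | rfl | h
  · rw [Amat_of_lt (Fin.succAbove_lt_succAbove_iff.2 h), Amat_of_lt h, eps_succAbove hl1 hl2 h]
  · rw [Amat_self, Amat_self]
  · rw [Amat_of_gt (Fin.succAbove_lt_succAbove_iff.2 h), Amat_of_gt h,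
      eps_succAbove hl1 hl2 h]

end

theorem inclusion_poisson_general (n k : ℕ) (ℓ : Fin (n + 1))
    (hl1 : k < ℓ.1) (hl2 : ℓ.1 ≤ n - k)
    (i j : Fin n) (x : Fin n → ℝ) :
    Amat (n + 1) k (ℓ.succAbove i) (ℓ.succAbove j)
        * (ℓ.insertNth (0 : ℝ) x : Fin (n + 1) → ℝ) (ℓ.succAbove i)
        * (ℓ.insertNth (0 : ℝ) x : Fin (n + 1) → ℝ) (ℓ.succAbove j)
      = Amat n k i j * x i * x j := by
  rw [Fin.insertNth_apply_succAbove, Fin.insertNth_apply_succAbove,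
    ← Matrix.submatrix_apply (Amat (n + 1) k), Amat_submatrix_succAbove hl1 hl2]

/-- for `k < ℓ ≤ n-k`, the inclusion `ι_ℓ : ℝ^n → ℝ^{n+1}` inserting a zero
at (0-based) position `ℓ` (i.e. `Fin.insertNth ℓ 0`) identifies the reduced bracket of the
coordinate functions `x_i ∘ p_ℓ`, `x_j ∘ p_ℓ` (which are the coordinates `y_{ℓ.succAbove i}`,
`y_{ℓ.succAbove j}`) on `(ℝ^{n+1}, π_k^{(n+1)})`, restricted to `ι_ℓ(ℝ^n)`, with the bracket
`{x_i,x_j}_k^{(n)} = ε_{n+i,k+j} x_i x_j` of `π_k^{(n)}`. -/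
theorem inclusion_poisson (n k : ℕ) (hk : k ≤ n) (ℓ : Fin (n + 1))
    (hl1 : k < ℓ.1) (hl2 : ℓ.1 ≤ n - k)
    (i j : Fin n) (hij : i < j) (x : Fin n → ℝ) :
    Amat (n + 1) k (ℓ.succAbove i) (ℓ.succAbove j)
        * (ℓ.insertNth (0 : ℝ) x : Fin (n + 1) → ℝ) (ℓ.succAbove i)
        * (ℓ.insertNth (0 : ℝ) x : Fin (n + 1) → ℝ) (ℓ.succAbove j)
      = Amat n k i j * x i * x j :=
  inclusion_poisson_general n k ℓ hl1 hl2 i j x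
end

section
/- For 0 < 2k < n, the map φ_k : ℝ^n → ℝ^{n-2k} defined by φ_k(x)_i = P_k · x_{i+k}, where P_k = x_1⋯x_k · x_{n-k+1}⋯x_n, is a Poisson map from (ℝ^n, π_k^{(n)}) to (ℝ^{n-2k}, π_0^{(n-2k)}): for all 1 ≤ i < j ≤ n-2k, {P_k x_{i+k}, P_k x_{j+k}}_k^{(n)} = P_k^2 x_{i+k} x_{j+k}. -/
open Finset

/-- The diagonal quadratic Poisson bracket `π_k^{(n)}` of two smooth functions:
`{f,g}(x) = ∑_{a,b} (A_k)_{a,b} x_a x_b ∂_a f ∂_b g`. -/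
noncomputable def pb (n k : ℕ) (f g : (Fin n → ℝ) → ℝ) (x : Fin n → ℝ) : ℝ :=
  ∑ a, ∑ b, Amat n k a b * x a * x b
    * fderiv ℝ f x (Pi.single a 1) * fderiv ℝ g x (Pi.single b 1)

/-- `P_k = x_1 ⋯ x_k · x_{n-k+1} ⋯ x_n` (positions 1-based). -/
noncomputable def Pk (n k : ℕ) : (Fin n → ℝ) → ℝ := fun x =>
  ∏ a ∈ univ.filter (fun a : Fin n => a.1 + 1 ≤ k ∨ n - k + 1 ≤ a.1 + 1), x a


/-! For square-free monomials `x^T`, `x^U` the bracket is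
`x^T x^U ∑_{a ∈ T, b ∈ U} (A_k)_{a,b}`. With `S` the index set of `P_k` and `k ≤ I < J < n - k`,
the functions `P_k x_I` and `P_k x_J` are the monomials on `S ∪ {I}` and `S ∪ {J}`, so the double
sum splits into `(A_k)_{I,J} = 1`, the `S × S` block, which vanishes by skew-symmetry, and two
mixed sums over `S`, which vanish because a middle index meets `+1` from each of the `k` leading
and `-1` from each of the `k` trailing indices. -/

open scoped Matrix

lemma sum_sum_eq_zero_of_transpose_eq_neg {ι R : Type*} [CommRing R] [NoZeroDivisors R]
    [CharZero R] {M : Matrix ι ι R} (hM : Mᵀ = -M) (s : Finset ι) :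
    ∑ a ∈ s, ∑ b ∈ s, M a b = 0 := by
  have hskew (a b : ι) : M a b = -M b a := by simpa using congrFun (congrFun hM b) a
  refine self_eq_neg.mp ?_
  calc ∑ a ∈ s, ∑ b ∈ s, M a b = ∑ a ∈ s, ∑ b ∈ s, -M b a := by simp only [← hskew]
    _ = -∑ a ∈ s, ∑ b ∈ s, M a b := by rw [sum_comm]; simp only [sum_neg_distrib]

lemma mul_fderiv_prod_apply_single {n : ℕ} (T : Finset (Fin n)) (x : Fin n → ℝ)
    (b : Fin n) :
    x b * fderiv ℝ (fun y : Fin n → ℝ => ∏ a ∈ T, y a) x (Pi.single b 1)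
      = if b ∈ T then ∏ a ∈ T, x a else 0 := by
  have h : HasFDerivAt (fun y : Fin n → ℝ => ∏ a ∈ T, y a)
      (∑ c ∈ T, (∏ a ∈ T.erase c, x a) • ContinuousLinearMap.proj c) x :=
    HasFDerivAt.finsetProd fun c _ => hasFDerivAt_apply (𝕜 := ℝ) c x
  rw [h.fderiv]
  simp only [_root_.sum_apply, _root_.smul_apply, ContinuousLinearMap.proj_apply, smul_eq_mul,
    Pi.single_apply, mul_ite, mul_one, mul_zero, sum_ite_eq']
  split_ifs with hb
  · exact mul_prod_erase T x hb
  · rfl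

lemma Amat_transpose (n k : ℕ) : (Amat n k)ᵀ = -Amat n k := by
  ext a b
  simp only [Matrix.transpose_apply, Matrix.neg_apply, Amat]
  rcases lt_trichotomy a b with h | rfl | h
  · simp [h, h.not_gt]
  · simp
  · simp [h, h.not_gt]

lemma Amat_swap (n k : ℕ) (a b : Fin n) : Amat n k a b = -Amat n k b a := by
  simpa using congrFun (congrFun (Amat_transpose n k) b) a

lemma Amat_of_lt_s6 {n k : ℕ} {a b : Fin n} (h : a < b) :
    Amat n k a b = if k + b.1 < n + a.1 then 1 else -1 := by
  simp only [Amat, eps, if_pos h]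
  exact if_congr (by omega) rfl rfl

lemma pb_prod_prod (n k : ℕ) (T U : Finset (Fin n)) (x : Fin n → ℝ) :
    pb n k (fun y => ∏ a ∈ T, y a) (fun y => ∏ b ∈ U, y b) x
      = (∏ a ∈ T, x a) * (∏ b ∈ U, x b) * ∑ a ∈ T, ∑ b ∈ U, Amat n k a b := by
  have hterm (a b : Fin n) : Amat n k a b * x a * x b
      * fderiv ℝ (fun y : Fin n → ℝ => ∏ c ∈ T, y c) x (Pi.single a 1)
      * fderiv ℝ (fun y : Fin n → ℝ => ∏ c ∈ U, y c) x (Pi.single b 1)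
      = if a ∈ T then
          if b ∈ U then (∏ c ∈ T, x c) * (∏ c ∈ U, x c) * Amat n k a b else 0
        else 0 := by
    rw [mul_right_comm _ (x b), mul_assoc _ (x b), mul_assoc _ (x a),
      mul_fderiv_prod_apply_single, mul_fderiv_prod_apply_single]
    split_ifs <;> ring
  simp only [pb, hterm, sum_ite_irrel, sum_const_zero, sum_ite_mem, univ_inter, mul_sum]

def pkIndices (n k : ℕ) : Finset (Fin n) := {a : Fin n | a.1 < k ∨ n - k ≤ a.1}

lemma Pk_eq_prod_pkIndices (n k : ℕ) (x : Fin n → ℝ) :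
    Pk n k x = ∏ a ∈ pkIndices n k, x a := by
  unfold Pk pkIndices
  congr 1
  ext a
  simp only [mem_filter, mem_univ, true_and]
  omega

lemma sum_pkIndices_Amat_col {n k : ℕ} (J : Fin n) (hkJ : k ≤ J.1) (hJn : J.1 + k < n) :
    ∑ a ∈ pkIndices n k, Amat n k a J = 0 := by
  have hleft :
      (pkIndices n k).filter (fun a => a.1 < k) = ({a | a.1 < k} : Finset (Fin n)) := by
    ext a; simp only [pkIndices, mem_filter, mem_univ, true_and]; omega
  have hright :
      (pkIndices n k).filter (fun a => ¬a.1 < k) = ({a | ¬a.1 < n - k} : Finset (Fin n)) := by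
    ext a; simp only [pkIndices, mem_filter, mem_univ, true_and]; omega
  have hone (a : Fin n) (ha : a ∈ ({a | a.1 < k} : Finset (Fin n))) : Amat n k a J = 1 := by
    rw [mem_filter] at ha
    rw [Amat_of_lt_s6 (Fin.lt_def.2 (by omega)), if_pos (by omega)]
  have hnegone (a : Fin n) (ha : a ∈ ({a | ¬a.1 < n - k} : Finset (Fin n))) :
      Amat n k a J = -1 := by
    rw [mem_filter] at ha
    rw [Amat_swap, Amat_of_lt_s6 (Fin.lt_def.2 (by omega)), if_pos (by omega)]
  have hcard_right : #({a | ¬a.1 < n - k} : Finset (Fin n)) = k := by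
    have := card_filter_add_card_filter_not (s := (univ : Finset (Fin n))) (fun a => a.1 < n - k)
    rw [Fin.card_filter_val_lt, card_univ, Fintype.card_fin] at this
    omega
  rw [← sum_filter_add_sum_filter_not _ (fun a => a.1 < k), hleft, hright, sum_congr rfl hone,
    sum_congr rfl hnegone, sum_const, sum_const, Fin.card_filter_val_lt, hcard_right,
    min_eq_right (by omega)]
  simp

lemma sum_pkIndices_Amat_row {n k : ℕ} (I : Fin n) (hkI : k ≤ I.1) (hIn : I.1 + k < n) :
    ∑ b ∈ pkIndices n k, Amat n k I b = 0 := by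
  rw [sum_congr rfl fun b _ => Amat_swap n k I b, sum_neg_distrib,
    sum_pkIndices_Amat_col I hkI hIn, neg_zero]

lemma pb_Pk_mul_apply {n k : ℕ} (I J : Fin n) (hkI : k ≤ I.1) (hIJ : I < J) (hJn : J.1 + k < n)
    (x : Fin n → ℝ) :
    pb n k (fun y => Pk n k y * y I) (fun y => Pk n k y * y J) x = Pk n k x ^ 2 * x I * x J := by
  have hIJ' : I.1 < J.1 := hIJ
  have hI : I ∉ pkIndices n k := by simp only [pkIndices, mem_filter, mem_univ, true_and]; omega
  have hJ : J ∉ pkIndices n k := by simp only [pkIndices, mem_filter, mem_univ, true_and]; omega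
  have hPk_mul (K : Fin n) (hK : K ∉ pkIndices n k) :
      (fun y => Pk n k y * y K) = fun y => ∏ a ∈ insert K (pkIndices n k), y a := by
    funext y
    rw [prod_insert hK, Pk_eq_prod_pkIndices, mul_comm]
  have hsum :
      ∑ a ∈ insert I (pkIndices n k), ∑ b ∈ insert J (pkIndices n k), Amat n k a b = 1 := by
    simp only [sum_insert hI, sum_insert hJ, sum_add_distrib,
      sum_pkIndices_Amat_row I hkI (by omega), sum_pkIndices_Amat_col J (by omega) hJn,
      sum_sum_eq_zero_of_transpose_eq_neg (Amat_transpose n k), Amat_of_lt_s6 hIJ,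
      if_pos (show k + J.1 < n + I.1 by omega)]
    norm_num
  rw [hPk_mul I hI, hPk_mul J hJ, pb_prod_prod, hsum, prod_insert hI, prod_insert hJ,
    Pk_eq_prod_pkIndices]
  ring

/-- for `0 < 2k < n`, the map `φ_k : ℝ^n → ℝ^{n-2k}`,
`φ_k(x)_i = P_k x_{i+k}`, is Poisson from `π_k^{(n)}` to `π_0^{(n-2k)}`:
`{P_k x_{i+k}, P_k x_{j+k}}_k^{(n)} = P_k² x_{i+k} x_{j+k}` for `1 ≤ i < j ≤ n-2k`. -/
theorem phi_poisson (n k : ℕ)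
    (i j : Fin (n - 2 * k)) (hij : i < j) (x : Fin n → ℝ) :
    pb n k (fun y => Pk n k y * y ⟨i.1 + k, by have := i.isLt; omega⟩)
        (fun y => Pk n k y * y ⟨j.1 + k, by have := j.isLt; omega⟩) x
      = (Pk n k x) ^ 2 * x ⟨i.1 + k, by have := i.isLt; omega⟩
          * x ⟨j.1 + k, by have := j.isLt; omega⟩ :=
  pb_Pk_mul_apply _ _ (Nat.le_add_left k i) (Fin.lt_def.2 (Nat.add_lt_add_right hij k))
    (by have := j.isLt; dsimp only; omega) x
end

section
/- The coordinate-reversal map ψ(x_1,...,x_n) = (x_n,...,x_1) is an anti-Poisson map from (ℝ^n, π_k^{(n)}) to itself for every 0 ≤ k < n: {x_i∘ψ, x_j∘ψ}_k = -{x_i,x_j}_k ∘ ψ for all i,j. -/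
/-- The coordinate-reversal map `ψ(x_1,…,x_n) = (x_n,…,x_1)`. -/
def psi (n : ℕ) (x : Fin n → ℝ) : Fin n → ℝ := fun a => x a.rev


lemma Amat_rev (n k : ℕ) (_hk : k < n) (i j : Fin n) :
    Amat n k i.rev j.rev = -(Amat n k i j) := by
  rcases lt_trichotomy i j with h | h | h
  · have h' : j.rev < i.rev := Fin.rev_lt_rev.mpr h
    have hne : ¬ i.rev < j.rev := not_lt_of_gt h'
    simp only [Amat, if_pos h, hne, if_false, if_pos h', eps, Fin.val_rev]
    have hi := i.2; have hj := j.2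
    by_cases hc : k + j.1 + 1 < n + i.1 + 1
    · rw [if_pos hc, if_pos (by omega)]
    · rw [if_neg hc, if_neg (by omega)]
  · subst h; simp [Amat]
  · have h' : i.rev < j.rev := Fin.rev_lt_rev.mpr h
    have hne : ¬ i < j := not_lt_of_gt h
    have hne' : ¬ j.rev < i.rev := not_lt_of_gt h'
    simp only [Amat, if_pos h', hne, if_false, if_pos h, hne', eps, Fin.val_rev]
    have hi := i.2; have hj := j.2
    by_cases hc : k + i.1 + 1 < n + j.1 + 1
    · rw [if_pos hc, if_pos (by omega)]; ring
    · rw [if_neg hc, if_neg (by omega)]; ring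

/-- `ψ` is an anti-Poisson map from `(ℝ^n, π_k^{(n)})` to itself:
`{x_i∘ψ, x_j∘ψ}_k = -{x_i,x_j}_k ∘ ψ` (note `x_i ∘ ψ` is the coordinate `x_{n+1-i}`,
and `({x_i,x_j}_k ∘ ψ)(x) = (A_k)_{i,j} (ψx)_i (ψx)_j`). -/
theorem psi_anti_poisson (n k : ℕ) (hk : k < n) (i j : Fin n) (x : Fin n → ℝ) :
    pb n k (fun y => y i.rev) (fun y => y j.rev) x
      = -(Amat n k i j * psi n x i * psi n x j) := by
  have hd : ∀ (c : Fin n), fderiv ℝ (fun y : Fin n → ℝ => y c) x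
      = ContinuousLinearMap.proj c :=
    fun c => (ContinuousLinearMap.proj c : ((Fin n → ℝ)) →L[ℝ] ℝ).fderiv
  unfold pb
  simp only [hd, ContinuousLinearMap.proj_apply, Pi.single_apply]
  rw [Finset.sum_eq_single i.rev]
  · rw [Finset.sum_eq_single j.rev]
    · simp [Amat_rev n k hk i j, psi]
    · intro b _ hb; simp [Ne.symm hb]
    · simp
  · intro a _ ha
    rw [Finset.sum_eq_single j.rev]
    · simp [Ne.symm ha]
    · intro b _ hb; simp [Ne.symm hb]
    · simp
  · simp
end
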